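/- Let k ≥ 1, m = 2k, and let v ∈ R_m^{+}(K̂) = P_m + span{x^m y, x y^m} vanish at every point of the boundary of the square [−1,1]². Then the coefficients of the monomials x^m y and x y^m in v are zero, and there exists a polynomial q of total degree ≤ 2k−4 such that v(x,y) = (1−x²)(1−y²) q(x,y); in particular v = 0 when k = 1. -/

import Mathlib

/-!
A polynomial vanishing on a box with infinite sides is zero, so vanishing on the boundary segments
of `[-1,1]²` already forces `v` to vanish after substituting `x = ±1` or `y = ±1`; hence
`v = (x² - 1)(y² - 1) q`. Write `v = (y² - 1) w`. The monomial `xᵐy` has degree `m + 1` and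
`y`-exponent `1 < 2`, so its coefficient in `v` is `-(coefficient of xᵐy in w)`, which vanishes
because `deg w = deg v - 2 ≤ m - 1`. This coefficient is `c₁`, and symmetrically `c₂ = 0`. Then
`v = p` has degree `≤ m`, and `deg q = deg v - 4 ≤ m - 4`; for `m = 2` this forces `q = 0`.
-/

namespace MvPolynomial

section SubstConst

variable {σ R : Type*} [CommRing R] [DecidableEq σ] {i : σ} {a : R} {f : MvPolynomial σ R}

noncomputable def substConst (i : σ) (a : R) : MvPolynomial σ R →ₐ[R] MvPolynomial σ R :=
  aeval (Function.update X i (C a))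

@[simp]
lemma substConst_X_self : substConst i a (X i) = C a := by
  simp [substConst]

@[simp]
lemma substConst_X_of_ne {j : σ} (h : j ≠ i) : substConst i a (X j) = X j := by
  simp [substConst, h]

lemma eval_substConst (s : σ → R) (f : MvPolynomial σ R) :
    eval s (substConst i a f) = eval (Function.update s i a) f := by
  change aeval s (aeval _ f) = aeval _ f
  rw [comp_aeval_apply]
  congr 1
  ext j
  rcases eq_or_ne j i with rfl | h <;> simp [*]

lemma X_sub_C_dvd_sub_substConst (f : MvPolynomial σ R) :
    X i - C a ∣ f - substConst i a f := by
  induction f using MvPolynomial.induction_on with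
  | C r => simp
  | add p q hp hq =>
    rw [map_add, add_sub_add_comm]
    exact dvd_add hp hq
  | mul_X p j hp =>
    rw [map_mul, show p * X j - substConst i a p * substConst i a (X j) =
      (p - substConst i a p) * X j + substConst i a p * (X j - substConst i a (X j)) by ring]
    refine dvd_add (dvd_mul_of_dvd_left hp _) (dvd_mul_of_dvd_right ?_ _)
    rcases eq_or_ne j i with rfl | h <;> simp [*]

lemma X_sub_C_dvd_iff_substConst_eq_zero : X i - C a ∣ f ↔ substConst i a f = 0 := by
  refine ⟨?_, fun h => by simpa [h] using X_sub_C_dvd_sub_substConst (i := i) (a := a) f⟩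
  rintro ⟨g, rfl⟩
  simp

lemma X_sub_C_mul_X_sub_C_dvd [IsDomain R] {b : R} (hab : a ≠ b) (ha : substConst i a f = 0)
    (hb : substConst i b f = 0) : (X i - C a) * (X i - C b) ∣ f := by
  obtain ⟨g, rfl⟩ := X_sub_C_dvd_iff_substConst_eq_zero.2 ha
  refine mul_dvd_mul_left _ (X_sub_C_dvd_iff_substConst_eq_zero.2 ?_)
  rw [map_mul, map_sub, substConst_X_self, algHom_C, mul_eq_zero] at hb
  exact hb.resolve_left (sub_ne_zero.2 (C_injective σ R |>.ne hab.symm))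

lemma X_sq_sub_one_dvd [IsDomain R] [NeZero (2 : R)] (h₁ : substConst i 1 f = 0)
    (h₂ : substConst i (-1) f = 0) : X i ^ 2 - 1 ∣ f := by
  have hX : (X i ^ 2 - 1 : MvPolynomial σ R) = (X i - C 1) * (X i - C (-1)) := by
    rw [map_neg, map_one]
    ring
  rw [hX]
  exact X_sub_C_mul_X_sub_C_dvd
    (fun h => (two_ne_zero : (2 : R) ≠ 0) (by linear_combination h)) h₁ h₂

lemma substConst_eq_zero_of_eval_eq_zero [IsDomain R] {S : σ → Set R}
    (hS : ∀ j, (S j).Infinite) (ha : a ∈ S i)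
    (h : ∀ s ∈ Set.univ.pi S, s i = a → eval s f = 0) : substConst i a f = 0 := by
  refine funext_set S hS fun s hs => ?_
  rw [eval_substConst, map_zero]
  exact h _ (Set.update_mem_pi_iff_of_mem hs |>.2 fun _ => ha) (by simp)

end SubstConst

section Degree

variable {σ R : Type*} [CommRing R] {n : ℕ}

lemma totalDegree_X_pow_sub_one [Nontrivial R] (i : σ) (hn : 0 < n) :
    (X i ^ n - 1 : MvPolynomial σ R).totalDegree = n := by
  rw [sub_eq_add_neg, totalDegree_add_eq_left_of_totalDegree_lt] <;> simp [hn]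

lemma X_pow_sub_one_ne_zero [Nontrivial R] (i : σ) (hn : 0 < n) :
    (X i ^ n - 1 : MvPolynomial σ R) ≠ 0 := fun h => by
  have := totalDegree_X_pow_sub_one (R := R) i hn
  rw [h, totalDegree_zero] at this
  omega

lemma totalDegree_X_pow_sub_one_mul [IsDomain R] (i : σ) (hn : 0 < n)
    {w : MvPolynomial σ R} (hw : w ≠ 0) :
    ((X i ^ n - 1) * w).totalDegree = n + w.totalDegree := by
  rw [totalDegree_mul_of_isDomain (X_pow_sub_one_ne_zero i hn) hw, totalDegree_X_pow_sub_one i hn]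

lemma totalDegree_X_sq_sub_one_mul_X_sq_sub_one_mul [IsDomain R] (i j : σ)
    {q : MvPolynomial σ R} (hq : q ≠ 0) :
    ((X i ^ 2 - 1) * (X j ^ 2 - 1) * q).totalDegree = q.totalDegree + 4 := by
  rw [mul_assoc, totalDegree_X_pow_sub_one_mul i two_pos
    (mul_ne_zero (X_pow_sub_one_ne_zero j two_pos) hq), totalDegree_X_pow_sub_one_mul j two_pos hq]
  ring

-- Only the `-w` part of `(X i ^ n - 1) * w` reaches monomials with `d i < n`.
lemma coeff_X_pow_sub_one_mul_eq_zero [IsDomain R] (i : σ) (w : MvPolynomial σ R)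
    {d : σ →₀ ℕ} (hd : d i < n) (hdeg : ((X i ^ n - 1) * w).totalDegree < d.degree + n) :
    coeff d ((X i ^ n - 1) * w) = 0 := by
  classical
  rw [sub_mul, coeff_sub, one_mul, X_pow_eq_monomial, coeff_monomial_mul',
    if_neg fun h => by simpa using (h i).trans_lt hd, zero_sub, neg_eq_zero]
  rcases eq_or_ne w 0 with rfl | hw
  · simp
  rw [totalDegree_X_pow_sub_one_mul i (by omega) hw] at hdeg
  exact coeff_eq_zero_of_totalDegree_lt (by rw [← Finsupp.degree_apply]; omega)

end Degree

section RPlus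

variable {R : Type*} [CommRing R]

-- For `p.totalDegree ≤ n` this is the general element of `Rₙ⁺ = Pₙ + span {xⁿy, xyⁿ}`.
noncomputable def rPlus (n : ℕ) (p : MvPolynomial (Fin 2) R) (c₁ c₂ : R) :
    MvPolynomial (Fin 2) R :=
  p + C c₁ * (X 0 ^ n * X 1) + C c₂ * (X 0 * X 1 ^ n)

variable {n : ℕ} {p : MvPolynomial (Fin 2) R} {c₁ c₂ : R}

lemma rPlus_eq_add_monomial : rPlus n p c₁ c₂ =
    p + monomial (Finsupp.single 0 n + Finsupp.single 1 1) c₁ +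
      monomial (Finsupp.single 0 1 + Finsupp.single 1 n) c₂ := by
  rw [rPlus, X_pow_eq_monomial, X_pow_eq_monomial]
  simp only [X, monomial_mul, C_mul_monomial, mul_one]

lemma totalDegree_rPlus_le (hp : p.totalDegree ≤ n) : (rPlus n p c₁ c₂).totalDegree ≤ n + 1 := by
  have hmon (s : Fin 2 →₀ ℕ) (c : R) : (monomial s c).totalDegree ≤ s.degree :=
    totalDegree_monomial_le s c
  rw [rPlus_eq_add_monomial]
  refine (totalDegree_add _ _).trans (max_le ((totalDegree_add _ _).trans
    (max_le (by omega) ((hmon _ _).trans ?_))) ((hmon _ _).trans ?_)) <;>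
    simp [add_comm]

lemma coeff_rPlus_left (hp : p.totalDegree ≤ n) (hn : n ≠ 1) :
    (rPlus n p c₁ c₂).coeff (Finsupp.single 0 n + Finsupp.single 1 1) = c₁ := by
  rw [rPlus_eq_add_monomial, coeff_add, coeff_add, coeff_monomial, coeff_monomial, if_pos rfl,
    if_neg, coeff_eq_zero_of_totalDegree_lt]
  · simp
  · rw [← Finsupp.degree_apply, map_add, Finsupp.degree_single, Finsupp.degree_single]
    omega
  · exact fun h => hn (by simpa using (DFunLike.congr_fun h 0).symm)

lemma coeff_rPlus_right (hp : p.totalDegree ≤ n) (hn : n ≠ 1) :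
    (rPlus n p c₁ c₂).coeff (Finsupp.single 0 1 + Finsupp.single 1 n) = c₂ := by
  rw [rPlus_eq_add_monomial, coeff_add, coeff_add, coeff_monomial, coeff_monomial, if_pos rfl,
    if_neg, coeff_eq_zero_of_totalDegree_lt]
  · simp
  · rw [← Finsupp.degree_apply, map_add, Finsupp.degree_single, Finsupp.degree_single]
    omega
  · exact fun h => hn (by simpa using DFunLike.congr_fun h 0)

lemma rPlus_coeffs_eq_zero_of_eq_mul [IsDomain R] (hp : p.totalDegree ≤ n) (hn : n ≠ 1)
    {q : MvPolynomial (Fin 2) R} (hq : rPlus n p c₁ c₂ = (X 0 ^ 2 - 1) * (X 1 ^ 2 - 1) * q) :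
    c₁ = 0 ∧ c₂ = 0 := by
  have hq₀ : rPlus n p c₁ c₂ = (X 0 ^ 2 - 1) * ((X 1 ^ 2 - 1) * q) := by rw [hq, mul_assoc]
  have hq₁ : rPlus n p c₁ c₂ = (X 1 ^ 2 - 1) * ((X 0 ^ 2 - 1) * q) := by rw [hq]; ring
  have hdeg := totalDegree_rPlus_le (c₁ := c₁) (c₂ := c₂) hp
  constructor
  · rw [← coeff_rPlus_left (c₁ := c₁) (c₂ := c₂) hp hn, hq₁]
    refine coeff_X_pow_sub_one_mul_eq_zero 1 _ (by simp) ?_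
    rw [← hq₁, map_add, Finsupp.degree_single, Finsupp.degree_single]
    omega
  · rw [← coeff_rPlus_right (c₁ := c₁) (c₂ := c₂) hp hn, hq₀]
    refine coeff_X_pow_sub_one_mul_eq_zero 0 _ (by simp) ?_
    rw [← hq₀, map_add, Finsupp.degree_single, Finsupp.degree_single]
    omega

end RPlus

lemma exists_eq_X_sq_sub_one_mul_X_sq_sub_one_mul {R : Type*} [CommRing R] [IsDomain R]
    [NeZero (2 : R)] {v : MvPolynomial (Fin 2) R}
    (hv : ∀ i a, (a = 1 ∨ a = -1) → substConst i a v = 0) :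
    ∃ q, v = (X 0 ^ 2 - 1) * (X 1 ^ 2 - 1) * q := by
  obtain ⟨w, rfl⟩ := X_sq_sub_one_dvd (hv 0 1 (.inl rfl)) (hv 0 (-1) (.inr rfl))
  have hw : ∀ a : R, (a = 1 ∨ a = -1) → substConst 1 a w = 0 := fun a ha => by
    have := hv 1 a ha
    rwa [map_mul, map_sub, map_pow, substConst_X_of_ne (by decide), map_one, mul_eq_zero,
      or_iff_right (X_pow_sub_one_ne_zero 0 two_pos)] at this
  obtain ⟨q, rfl⟩ := X_sq_sub_one_dvd (hw 1 (.inl rfl)) (hw (-1) (.inr rfl))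
  exact ⟨q, (mul_assoc _ _ _).symm⟩

lemma substConst_eq_zero_of_eval_boundary_eq_zero {v : MvPolynomial (Fin 2) ℝ}
    (hbd : ∀ x y : ℝ, x ∈ Set.Icc (-1 : ℝ) 1 → y ∈ Set.Icc (-1 : ℝ) 1 →
      (x = 1 ∨ x = -1 ∨ y = 1 ∨ y = -1) → eval ![x, y] v = 0)
    (i : Fin 2) {a : ℝ} (ha : a = 1 ∨ a = -1) : substConst i a v = 0 := by
  refine substConst_eq_zero_of_eval_eq_zero (S := fun _ => Set.Icc (-1) 1)
    (fun _ => Set.Icc_infinite (by norm_num)) (by rcases ha with rfl | rfl <;> norm_num)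
    fun s hs hsi => ?_
  have hs' : s = ![s 0, s 1] := by ext j; fin_cases j <;> rfl
  rw [hs']
  refine hbd _ _ (hs 0 trivial) (hs 1 trivial) ?_
  fin_cases i <;> simp only [← hsi] at ha <;> tauto

end MvPolynomial

open MvPolynomial

theorem stmt_11_general (k : ℕ)
    -- v ∈ R_m⁺(K̂), m = 2k, with its decomposition v = p + c₁ xᵐy + c₂ xyᵐ
    (v p : MvPolynomial (Fin 2) ℝ) (c₁ c₂ : ℝ)
    (hp : p.totalDegree ≤ 2 * k)
    (hv : v = p + MvPolynomial.C c₁ * (MvPolynomial.X 0 ^ (2 * k) * MvPolynomial.X 1) +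
      MvPolynomial.C c₂ * (MvPolynomial.X 0 * MvPolynomial.X 1 ^ (2 * k)))
    -- v vanishes on the boundary of [−1,1]²
    (hbd : ∀ x y : ℝ, x ∈ Set.Icc (-1 : ℝ) 1 → y ∈ Set.Icc (-1 : ℝ) 1 →
      (x = 1 ∨ x = -1 ∨ y = 1 ∨ y = -1) → MvPolynomial.eval ![x, y] v = 0) :
    c₁ = 0 ∧ c₂ = 0 ∧
    (∃ q : MvPolynomial (Fin 2) ℝ,
      (∀ d ∈ q.support, ((d 0 + d 1 : ℕ) : ℤ) ≤ 2 * (k : ℤ) - 4) ∧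
      v = (1 - MvPolynomial.X 0 ^ 2) * (1 - MvPolynomial.X 1 ^ 2) * q) ∧
    (k = 1 → v = 0) := by
  replace hv : v = rPlus (2 * k) p c₁ c₂ := hv
  obtain ⟨q, hq⟩ := exists_eq_X_sq_sub_one_mul_X_sq_sub_one_mul fun i _ =>
    substConst_eq_zero_of_eval_boundary_eq_zero hbd i
  obtain ⟨hc₁, hc₂⟩ := rPlus_coeffs_eq_zero_of_eq_mul hp (by omega) (hv ▸ hq)
  have hq_deg : q ≠ 0 → q.totalDegree + 4 ≤ 2 * k := fun hq0 => by
    rw [← totalDegree_X_sq_sub_one_mul_X_sq_sub_one_mul 0 1 hq0, ← hq, hv, hc₁, hc₂]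
    simpa [rPlus] using hp
  refine ⟨hc₁, hc₂, ⟨q, fun d hd => ?_, by rw [hq]; ring⟩, fun hk => ?_⟩
  · have hdq := le_totalDegree hd
    rw [Finsupp.sum_fintype _ _ fun _ => rfl, Fin.sum_univ_two] at hdq
    have := hq_deg fun h => by simp [h] at hd
    omega
  · have hq0 : q = 0 := by
      by_contra h
      have := hq_deg h
      omega
    rw [hq, hq0, mul_zero]

theorem stmt_11 (k : ℕ) (hk : 1 ≤ k)
    -- v ∈ R_m⁺(K̂), m = 2k, with its decomposition v = p + c₁ xᵐy + c₂ xyᵐ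
    (v p : MvPolynomial (Fin 2) ℝ) (c₁ c₂ : ℝ)
    (hp : p.totalDegree ≤ 2 * k)
    (hv : v = p + MvPolynomial.C c₁ * (MvPolynomial.X 0 ^ (2 * k) * MvPolynomial.X 1) +
      MvPolynomial.C c₂ * (MvPolynomial.X 0 * MvPolynomial.X 1 ^ (2 * k)))
    -- v vanishes on the boundary of [−1,1]²
    (hbd : ∀ x y : ℝ, x ∈ Set.Icc (-1 : ℝ) 1 → y ∈ Set.Icc (-1 : ℝ) 1 →
      (x = 1 ∨ x = -1 ∨ y = 1 ∨ y = -1) → MvPolynomial.eval ![x, y] v = 0) :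
    c₁ = 0 ∧ c₂ = 0 ∧
    (∃ q : MvPolynomial (Fin 2) ℝ,
      (∀ d ∈ q.support, ((d 0 + d 1 : ℕ) : ℤ) ≤ 2 * (k : ℤ) - 4) ∧
      v = (1 - MvPolynomial.X 0 ^ 2) * (1 - MvPolynomial.X 1 ^ 2) * q) ∧
    (k = 1 → v = 0) :=
  stmt_11_general k v p c₁ c₂ hp hv hbd
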